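/- arXiv:1909.11955 — 3 statements merged into one kernel-verified Lean document; each statement's English description precedes it below -/
import Mathlib

section
/- For any fixed (w,s) ∈ ℂ* × ℝ, the left translation L_{(w,s)}(z,t) = (wz, s + t|w|²) pulls back the 1-form ω* = (dt + 2 Im(z̄ dz)) / (2|z|²) to itself: L_{(w,s)}* ω* = ω*. -/
/-- Evaluation of the contact form ω* = (dt + 2 Im(z̄ dz))/(2|z|²) at a point with
first coordinate z on the tangent vector (v, τ) ∈ ℂ × ℝ. -/
noncomputable def omegaStar (z v : ℂ) (τ : ℝ) : ℝ :=
  (τ + 2 * (star z * v).im) / (2 * ‖z‖ ^ 2)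

/-- Left translation L_{(w,s)}(z,t) = (wz, s + t|w|²). -/
noncomputable def Ltrans (w : ℂ) (s : ℝ) (p : ℂ × ℝ) : ℂ × ℝ :=
  (w * p.1, s + p.2 * ‖w‖ ^ 2)

/-!
`Ltrans w s` is affine with linear part `(v, τ) ↦ (w v, |w|² τ)`. Under it `z̄ v` becomes
`|w|² z̄ v`, so numerator and denominator of `ω*` are both multiplied by `|w|²`.
-/

theorem hasFDerivAt_Ltrans (w : ℂ) (s : ℝ) (p : ℂ × ℝ) :
    HasFDerivAt (Ltrans w s)
      (((ContinuousLinearMap.mul ℝ ℂ w).comp (.fst ℝ ℂ ℝ)).prod (‖w‖ ^ 2 • .snd ℝ ℂ ℝ)) p :=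
  ((ContinuousLinearMap.mul ℝ ℂ w).hasFDerivAt.comp p hasFDerivAt_fst).prodMk
    ((hasFDerivAt_snd.mul_const _).const_add s)

theorem fderiv_Ltrans_apply (w : ℂ) (s : ℝ) (p u : ℂ × ℝ) :
    fderiv ℝ (Ltrans w s) p u = (w * u.1, u.2 * ‖w‖ ^ 2) := by
  rw [(hasFDerivAt_Ltrans w s p).fderiv]
  simp [mul_comm]

theorem im_star_mul_mul_star (w z v : ℂ) :
    (star (w * z) * (w * v)).im = ‖w‖ ^ 2 * (star z * v).im := by
  rw [star_mul', mul_mul_mul_comm, Complex.star_def, Complex.conj_mul', ← Complex.ofReal_pow,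
    Complex.im_ofReal_mul]

theorem omegaStar_mul (w z v : ℂ) (τ : ℝ) (hw : w ≠ 0) :
    omegaStar (w * z) (w * v) (τ * ‖w‖ ^ 2) = omegaStar z v τ := by
  have hw2 : ‖w‖ ^ 2 ≠ 0 := by positivity
  rw [omegaStar, omegaStar, im_star_mul_mul_star, norm_mul, mul_pow,
    show τ * ‖w‖ ^ 2 + 2 * (‖w‖ ^ 2 * (star z * v).im) =
      ‖w‖ ^ 2 * (τ + 2 * (star z * v).im) by ring,
    mul_left_comm, mul_div_mul_left _ _ hw2]

/-- Left translations pull back ω* to itself: for every tangent vector u at p,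
ω*_{L p}((DL)_p u) = ω*_p(u). -/
theorem stmt_6 :
    ∀ (w : ℂ) (s : ℝ), w ≠ 0 → ∀ p : ℂ × ℝ, p.1 ≠ 0 → ∀ u : ℂ × ℝ,
      omegaStar (Ltrans w s p).1
        (fderiv ℝ (Ltrans w s) p u).1 (fderiv ℝ (Ltrans w s) p u).2 =
      omegaStar p.1 u.1 u.2 := by
  intro w s hw p _ u
  rw [fderiv_Ltrans_apply]
  exact omegaStar_mul w p.1 u.1 u.2 hw
end

section
/- The Korányi map α(z,t) = −|z|² + it from ℂ* × ℝ to the left half-plane 𝓛 = {ζ : Re ζ < 0} pulls back the hyperbolic metric g_h = |dζ|²/(4 Re(ζ)²) to the tensor g*_cc = ((d(|z|²))² + dt²)/(4|z|⁴); equivalently, the differential of α sends 𝐗 ↦ Ξ and 𝐘 ↦ Η and 𝐓 ↦ 0, where Ξ = −2ξ∂_ξ, Η = −2ξ∂_η are the orthonormal frame on 𝓛 with coordinate ζ = ξ + iη. -/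
/-!
Since `d‖z‖² = 2⟪z, ·⟫_ℝ`, the differential of `α` is `dα_p(v, τ) = -2 Re(z̄ v) + iτ`. Its squared
modulus is `(2 Re(z̄ v))² + τ²`, while `Re α(p) = -|z|²`; and `Re(z̄ · iz) = 0` kills `𝐓`.
-/

/-- The Korányi map α(z,t) = −|z|² + it. -/
noncomputable def Amap (p : ℂ × ℝ) : ℂ :=
  (-(‖p.1‖ ^ 2 : ℝ) : ℂ) + (p.2 : ℂ) * Complex.I

/-- 𝐓 = x∂_y − y∂_x, tangent value (iz, 0). -/
noncomputable def Tb (p : ℂ × ℝ) : ℂ × ℝ := (Complex.I * p.1, 0)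

open Complex ContinuousLinearMap

theorem Amap_re (p : ℂ × ℝ) : (Amap p).re = -‖p.1‖ ^ 2 := by
  rw [Amap, add_re, neg_re, ofReal_re, re_ofReal_mul, I_re, mul_zero, add_zero]

theorem hasFDerivAt_Amap (p : ℂ × ℝ) :
    HasFDerivAt Amap (-ofRealCLM.comp ((2 • innerSL ℝ p.1).comp (fst ℝ ℂ ℝ))
      + I • ofRealCLM.comp (snd ℝ ℂ ℝ)) p :=
  (ofRealCLM.hasFDerivAt.comp p
      ((hasStrictFDerivAt_norm_sq p.1).hasFDerivAt.comp p hasFDerivAt_fst)).neg.add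
    ((ofRealCLM.hasFDerivAt.comp p hasFDerivAt_snd).mul_const I)

theorem fderiv_Amap_apply (p u : ℂ × ℝ) :
    fderiv ℝ Amap p u = -((2 * (star p.1 * u.1).re : ℝ) : ℂ) + (u.2 : ℂ) * I := by
  rw [(hasFDerivAt_Amap p).fderiv]
  simp only [add_apply, neg_apply, smul_apply, comp_apply, coe_fst', coe_snd', coe_innerSL_apply,
    Complex.inner, ofRealCLM_apply, nsmul_eq_mul, Nat.cast_ofNat, smul_eq_mul, star_def, mul_comm I]
  rw [mul_comm u.1]

theorem norm_sq_fderiv_Amap (p u : ℂ × ℝ) :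
    ‖fderiv ℝ Amap p u‖ ^ 2 = (2 * (star p.1 * u.1).re) ^ 2 + u.2 ^ 2 := by
  rw [fderiv_Amap_apply, ← ofReal_neg, Complex.sq_norm, normSq_add_mul_I, neg_sq]

theorem fderiv_Amap_Tb (p : ℂ × ℝ) : fderiv ℝ Amap p (Tb p) = 0 := by
  rw [fderiv_Amap_apply]
  simp [Tb]
  ring

/-- The Korányi map α sends ℂ* × ℝ into the left half-plane 𝓛 = {Re ζ < 0} and
pulls back the hyperbolic metric g_h = |dζ|²/(4 Re(ζ)²) to the sub-Riemannian
tensor g*_cc = ((d(|z|²))² + dt²)/(4|z|⁴): for every tangent vector u = (v,τ),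
|dα_p(u)|²/(4 Re(α p)²) = ((2 Re(z̄ v))² + τ²)/(4|z|⁴); moreover dα kills the
Reeb direction 𝐓. -/
theorem stmt_11 :
    ∀ p : ℂ × ℝ, p.1 ≠ 0 →
      (Amap p).re < 0 ∧
      (∀ u : ℂ × ℝ,
        ‖fderiv ℝ Amap p u‖ ^ 2 / (4 * (Amap p).re ^ 2) =
          ((2 * (star p.1 * u.1).re) ^ 2 + u.2 ^ 2) / (4 * ‖p.1‖ ^ 4)) ∧
      fderiv ℝ Amap p (Tb p) = 0 := by
  intro p hp
  refine ⟨?_, fun u => ?_, fderiv_Amap_Tb p⟩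
  · rw [Amap_re, neg_lt_zero]
    exact pow_pos (norm_pos_iff.mpr hp) 2
  · rw [norm_sq_fderiv_Amap, Amap_re]
    ring
end

section
/- For k > −1 and k' ∈ ℝ, define f : 𝓛 → 𝓛 in polar coordinates ζ = r e^{iθ} (with θ ∈ (π/2, 3π/2), Re ζ < 0) by f(ζ) = |ζ|^{k+1} e^{i·arctan(tan θ/(k+1) + k')} (appropriately branched so Re f < 0). Then f satisfies the symplectic condition Re(f(ζ))² = Re(ζ)² J_f(ζ), where J_f(ζ) = (1+k)(1+g'(θ))|ζ|^{2k} with g(θ) = arctan(tan θ/(k+1) + k') − θ. -/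
/-!
Writing t = Im ζ / Re ζ = tan θ and x = t/(k+1) + k', the real part of f(ζ) is
-|ζ|^{k+1} cos(arctan x), which is negative because cos ∘ arctan > 0. Squaring with
cos²(arctan x) = 1/(1+x²) gives Re(f ζ)² = |ζ|^{2k} |ζ|² / (1+x²); the right-hand side
reduces to the same expression since |ζ|² = Re(ζ)² (1+t²) and
(k+1)² + (t + k'(k+1))² = (k+1)² (1+x²).
-/

/-- The spiral-stretch map f(ζ) = |ζ|^{k+1} e^{i arctan(tan θ/(k+1) + k')},
branched so that Re f < 0 (here tan θ = Im ζ / Re ζ on 𝓛 = {Re ζ < 0}). -/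
noncomputable def spiralStretch (k k' : ℝ) (w : ℂ) : ℂ :=
  -(((‖w‖ ^ (k + 1) : ℝ)) : ℂ) *
    Complex.exp (Complex.I * ((Real.arctan (w.im / w.re / (k + 1) + k') : ℝ) : ℂ))

open Real

/-- The tangent of the argument of `-spiralStretch k k' w`. -/
noncomputable def spiralStretchTan (k k' : ℝ) (w : ℂ) : ℝ :=
  w.im / w.re / (k + 1) + k'

theorem spiralStretch_re (k k' : ℝ) (w : ℂ) :
    (spiralStretch k k' w).re = -(‖w‖ ^ (k + 1) * cos (arctan (spiralStretchTan k k' w))) := by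
  rw [spiralStretch, spiralStretchTan, mul_comm Complex.I, ← Complex.ofReal_neg,
    Complex.re_ofReal_mul, Complex.exp_ofReal_mul_I_re, neg_mul]

theorem spiralStretch_re_neg (k k' : ℝ) {w : ℂ} (hw : w ≠ 0) : (spiralStretch k k' w).re < 0 := by
  rw [spiralStretch_re, neg_lt_zero]
  exact mul_pos (rpow_pos_of_pos (norm_pos_iff.mpr hw) _) (cos_arctan_pos _)

theorem rpow_add_one_sq {a : ℝ} (ha : 0 < a) (k : ℝ) : (a ^ (k + 1)) ^ 2 = a ^ (2 * k) * a ^ 2 := by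
  rw [rpow_add_one ha.ne', mul_pow, mul_comm 2 k, ← rpow_mul_natCast ha.le, Nat.cast_ofNat]

theorem spiralStretch_re_sq (k k' : ℝ) {w : ℂ} (hw : w ≠ 0) :
    (spiralStretch k k' w).re ^ 2 =
      ‖w‖ ^ (2 * k) * ‖w‖ ^ 2 / (1 + spiralStretchTan k k' w ^ 2) := by
  rw [spiralStretch_re, neg_sq, mul_pow, rpow_add_one_sq (norm_pos_iff.mpr hw), cos_sq_arctan,
    mul_one_div]

-- `(k+1)(1+t²)/((k+1)² + (t+k'(k+1))²) - 1` is g'(θ) for g(θ) = arctan(t/(k+1) + k') − θ, t = tan θ.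
/-- For k > −1 the spiral-stretch map satisfies Re f < 0 on 𝓛 and the symplectic
condition Re(f ζ)² = Re(ζ)² J_f(ζ), with J_f(ζ) = (1+k)(1+g'(θ))|ζ|^{2k} where
g(θ) = arctan(tan θ/(k+1) + k') − θ, so that
g'(θ) = (k+1)(1+tan²θ)/((k+1)² + (tan θ + k'(k+1))²) − 1. -/
theorem stmt_18 :
    ∀ k k' : ℝ, -1 < k →
      ∀ ζ : ℂ, ζ.re < 0 →
        (spiralStretch k k' ζ).re < 0 ∧
        (spiralStretch k k' ζ).re ^ 2 =
          ζ.re ^ 2 * ((1 + k) *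
            (1 + ((k + 1) * (1 + (ζ.im / ζ.re) ^ 2) /
              ((k + 1) ^ 2 + (ζ.im / ζ.re + k' * (k + 1)) ^ 2) - 1)) *
            (‖ζ‖) ^ (2 * k)) := by
  intro k k' hk ζ hre
  have hζ : ζ ≠ 0 := fun h => by simp [h] at hre
  refine ⟨spiralStretch_re_neg k k' hζ, ?_⟩
  have hk1 : k + 1 ≠ 0 := by linarith
  have hre0 : ζ.re ≠ 0 := hre.ne
  have hnorm : ‖ζ‖ ^ 2 = ζ.re ^ 2 + ζ.im ^ 2 := by rw [Complex.sq_norm, Complex.normSq_apply]; ring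
  have hdenom : (k + 1) ^ 2 + (ζ.im / ζ.re + k' * (k + 1)) ^ 2 =
      (k + 1) ^ 2 * (1 + spiralStretchTan k k' ζ ^ 2) := by
    rw [spiralStretchTan]; field_simp
  rw [spiralStretch_re_sq k k' hζ, hdenom, hnorm]
  field_simp
  ring
end
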